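/- Let ε > 0, let u ∈ ℝ² be a unit vector and let x ∈ ℝ² satisfy ⟨x,u⟩ = 0. Then ([0,x] ⊕ {y ∈ B(ε) : ⟨y,u⟩ ≥ 0}) \ (closedBall(0,ε) ∪ closedBall(x,ε)) ⊆ [0,x] ⊕ [0, εu], where [p,q] denotes the closed segment between p and q. -/

import Mathlib

open Pointwise MeasureTheory Metric

noncomputable section

abbrev E2 := EuclideanSpace ℝ (Fin 2)

/-!
Write `y = c • x + a • u` with `a = ⟪y, u⟫ ∈ [0, ε]`, which is possible in the plane since
`x ⟂ u`. A point of the left-hand side is `p = t • x + y = (t + c) • x + a • u` with `t ∈ [0, 1]`.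
By Pythagoras, shrinking the `x`-coefficient of `c • x + a • u` in absolute value shrinks its norm:
if `t + c < 0` then `|t + c| ≤ |c|`, so `‖p‖ ≤ ‖y‖ ≤ ε`, and if `t + c > 1` then `|t + c - 1| ≤ |c|`,
so `‖p - x‖ ≤ ‖y‖ ≤ ε`. Hence a point outside both balls has `t + c ∈ [0, 1]`.
-/

open Set Module
open scoped RealInnerProductSpace EuclideanSpace

section InnerProductSpace

variable {F : Type*} [NormedAddCommGroup F] [InnerProductSpace ℝ F]

theorem mem_segment_zero_iff {x z : F} : z ∈ segment ℝ 0 x ↔ ∃ θ ∈ Icc (0 : ℝ) 1, θ • x = z := by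
  simp [segment_eq_image]

theorem norm_smul_add_le_norm_smul_add {x v : F} (hxv : ⟪x, v⟫ = 0) {b c : ℝ} (hbc : |b| ≤ |c|) :
    ‖b • x + v‖ ≤ ‖c • x + v‖ := by
  have pythagoras (d : ℝ) : ‖d • x + v‖ * ‖d • x + v‖ = |d| * ‖x‖ * (|d| * ‖x‖) + ‖v‖ * ‖v‖ := by
    rw [norm_add_sq_eq_norm_sq_add_norm_sq_real (by rw [real_inner_smul_left, hxv, mul_zero]),
      norm_smul, Real.norm_eq_abs]
  rw [mul_self_le_mul_self_iff (norm_nonneg _) (norm_nonneg _), pythagoras, pythagoras]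
  gcongr

theorem add_mem_Icc_of_norm_le_of_lt_norm {x v : F} (hxv : ⟪x, v⟫ = 0) {t c ε : ℝ}
    (ht : t ∈ Icc (0 : ℝ) 1) (hy : ‖c • x + v‖ ≤ ε) (hp : ε < ‖(t + c) • x + v‖)
    (hpx : ε < ‖(t + c - 1) • x + v‖) : t + c ∈ Icc (0 : ℝ) 1 := by
  obtain ⟨ht0, ht1⟩ := ht
  by_contra hmem
  rcases not_and_or.mp hmem with hneg | hgt
  · have : |t + c| ≤ |c| := by
      rw [abs_of_neg (not_le.mp hneg), abs_of_neg (by linarith)]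
      linarith
    linarith [norm_smul_add_le_norm_smul_add hxv this]
  · have : |t + c - 1| ≤ |c| := by
      rw [abs_of_pos (by linarith), abs_of_pos (by linarith)]
      linarith
    linarith [norm_smul_add_le_norm_smul_add hxv this]

theorem exists_eq_smul_add_inner_smul [Fact (finrank ℝ F = 2)] {x u : F} (hx : x ≠ 0)
    (hu : ‖u‖ = 1) (hxu : ⟪x, u⟫ = 0) (y : F) : ∃ c : ℝ, y = c • x + ⟪y, u⟫ • u := by
  have hu0 : u ≠ 0 := norm_ne_zero_iff.mp (by rw [hu]; exact one_ne_zero)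
  have hyu : ⟪u, y - ⟪y, u⟫ • u⟫ = 0 := by
    rw [inner_sub_right, real_inner_smul_right, real_inner_self_eq_norm_sq, hu, real_inner_comm]
    ring
  obtain ⟨c, hc⟩ := Submodule.mem_span_singleton.mp <|
    Submodule.mem_span_singleton_of_inner_eq_zero_of_inner_eq_zero hu0 hx hyu
      (by rw [real_inner_comm, hxu])
  exact ⟨c, by rw [hc, sub_add_cancel]⟩

end InnerProductSpace

theorem stmt_3 (ε : ℝ) (hε : 0 < ε)
    (u : E2) (hu : ‖u‖ = 1)
    (x : E2) (hxu : (inner ℝ x u : ℝ) = 0) :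
    (segment ℝ (0 : E2) x + {y ∈ closedBall (0 : E2) ε | (inner ℝ y u : ℝ) ≥ 0}) \
        (closedBall (0 : E2) ε ∪ closedBall x ε) ⊆
      segment ℝ (0 : E2) x + segment ℝ (0 : E2) (ε • u) := by
  rintro _ ⟨⟨s, hs, y, ⟨hy, hyu⟩, rfl⟩, hp⟩
  obtain ⟨t, ht, rfl⟩ := mem_segment_zero_iff.mp hs
  simp only [mem_union, mem_closedBall, dist_eq_norm, sub_zero, not_or, not_le] at hp
  rw [mem_closedBall_zero_iff] at hy
  obtain rfl | hx := eq_or_ne x 0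
  · simp only [smul_zero, zero_add] at hp
    linarith [hp.1]
  obtain ⟨c, hyc⟩ := exists_eq_smul_add_inner_smul hx hu hxu y
  set a := ⟪y, u⟫
  have hxa : ⟪x, a • u⟫ = 0 := by rw [real_inner_smul_right, hxu, mul_zero]
  have hp0 : (t + c) • x + a • u = t • x + y := by rw [hyc]; module
  have hpx : (t + c - 1) • x + a • u = t • x + y - x := by rw [hyc]; module
  have htc : t + c ∈ Icc (0 : ℝ) 1 :=
    add_mem_Icc_of_norm_le_of_lt_norm hxa ht (hyc ▸ hy) (hp0 ▸ hp.1) (hpx ▸ hp.2)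
  have haε : a ≤ ε := (real_inner_le_norm y u).trans (by rw [hu, mul_one]; exact hy)
  refine ⟨(t + c) • x, mem_segment_zero_iff.mpr ⟨_, htc, rfl⟩, a • u,
    mem_segment_zero_iff.mpr ⟨a / ε, ⟨div_nonneg hyu hε.le, div_le_one_of_le₀ haε hε.le⟩, ?_⟩, ?_⟩
  · rw [smul_smul, div_mul_cancel₀ _ hε.ne']
  · rw [hyc]
    module

end
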